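/- arXiv:math/0606596 — 3 statements merged into one kernel-verified Lean document; each statement's English description precedes it below -/
import Mathlib

section
/- Let 2 ≤ s < ∞. There exists a constant C ≥ 1 depending only on s such that for every probability space (Ω, μ), every n ≥ 1, and every independent family g_1, …, g_n of random variables in L_s(Ω, μ), one has C^{-1} [ (Σ_{k=1}^n ‖g_k‖_{L_s}^s)^{1/s} + (Σ_{k=1}^n ‖g_k‖_{L_2}^2)^{1/2} ] ≤ ( ∫_Ω (Σ_{k=1}^n g_k^2)^{s/2} dμ )^{1/s} ≤ C [ (Σ_{k=1}^n ‖g_k‖_{L_s}^s)^{1/s} + (Σ_{k=1}^n ‖g_k‖_{L_2}^2)^{1/2} ]. -/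
/-!
Put `Yᵢ = gᵢ²`, `S = ∑ Yᵢ` and `p = s / 2 ≥ 1`. Writing `S ^ p = ∑ Yᵢ S ^ (p - 1)` and
`S ≤ Yᵢ + Tᵢ`, where `Tᵢ = ∑_{j ≠ i} Yⱼ` is independent of `Yᵢ`, gives
`E Yᵢ S ^ (p - 1) ≤ 2 ^ (p - 1) (E Yᵢ ^ p + E Yᵢ · E S ^ (p - 1))`; Jensen for the concave power
`(p - 1) / p` then yields `E S ^ p ≤ 2 ^ (p - 1) (∑ E Yᵢ ^ p + ∑ E Yᵢ · (E S ^ p) ^ ((p - 1) / p))`,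
and one of the two terms on the right dominates, so
`(E S ^ p) ^ (1 / p) ≤ 2 ^ p ((∑ E Yᵢ ^ p) ^ (1 / p) + ∑ E Yᵢ)`. The reverse inequalities are the
superadditivity of `x ↦ x ^ p` and Jensen again. Taking square roots gives the square-function form.
-/

open MeasureTheory ProbabilityTheory Real Finset
open scoped ENNReal

namespace ENNReal

theorem mul_rpow_sub_one (x : ℝ≥0∞) {p : ℝ} (hp : 1 ≤ p) : x * x ^ (p - 1) = x ^ p := by
  conv_rhs => rw [← add_sub_cancel 1 p]
  rw [rpow_add_of_nonneg _ _ zero_le_one (by linarith), rpow_one]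

theorem le_two_rpow_mul_of_rpow_le {x a b : ℝ≥0∞} {p : ℝ} (hx : x ≠ ∞) (hp : 1 ≤ p)
    (h : x ^ p ≤ 2 ^ (p - 1) * (a + b * x ^ (p - 1))) : x ≤ 2 ^ p * (a ^ (1 / p) + b) := by
  have hp0 : 0 < p := by linarith
  have h2p : (2 : ℝ≥0∞) ≤ 2 ^ p := by
    simpa using rpow_le_rpow_of_exponent_le (x := 2) one_le_two hp
  rcases le_total (b * x ^ (p - 1)) a with hba | hab
  · have hxp : x ^ p ≤ 2 ^ p * a := by
      calc x ^ p ≤ 2 ^ (p - 1) * (a + a) := h.trans (by gcongr)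
        _ = 2 ^ p * a := by rw [← two_mul, ← mul_assoc, mul_comm _ 2, mul_rpow_sub_one _ hp]
    calc x = (x ^ p) ^ (1 / p) := by rw [← rpow_mul, mul_one_div_cancel hp0.ne', rpow_one]
      _ ≤ (2 ^ p * a) ^ (1 / p) := by gcongr
      _ = 2 * a ^ (1 / p) := by
        rw [mul_rpow_of_nonneg _ _ (by positivity), ← rpow_mul, mul_one_div_cancel hp0.ne',
          rpow_one]
      _ ≤ 2 ^ p * (a ^ (1 / p) + b) := by gcongr; exact le_self_add
  · rcases eq_or_ne x 0 with rfl | hx0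
    · exact zero_le
    have hxb : x * x ^ (p - 1) ≤ 2 ^ p * b * x ^ (p - 1) := by
      calc x * x ^ (p - 1) ≤ 2 ^ (p - 1) * (b * x ^ (p - 1) + b * x ^ (p - 1)) := by
            rw [mul_rpow_sub_one _ hp]; exact h.trans (by gcongr)
        _ = 2 ^ p * b * x ^ (p - 1) := by
          rw [← two_mul, ← mul_rpow_sub_one 2 hp]; ring
    have hc0 : x ^ (p - 1) ≠ 0 := by simp [rpow_eq_zero_iff, hx0, hx]
    have hct : x ^ (p - 1) ≠ ∞ := rpow_ne_top_of_nonneg (by linarith) hx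
    calc x ≤ 2 ^ p * b := (ENNReal.mul_le_mul_iff_left hc0 hct).1 hxb
      _ ≤ 2 ^ p * (a ^ (1 / p) + b) := by gcongr; exact le_add_self

theorem sum_rpow_le_rpow_sum {ι : Type*} (s : Finset ι) (f : ι → ℝ≥0∞) {p : ℝ} (hp : 1 ≤ p) :
    ∑ i ∈ s, f i ^ p ≤ (∑ i ∈ s, f i) ^ p := by
  classical
  induction s using Finset.induction with
  | empty => exact zero_le
  | insert a s ha ih =>
    rw [sum_insert ha, sum_insert ha]
    exact (add_le_add_right ih _).trans (add_rpow_le_rpow_add _ _ hp)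

end ENNReal

theorem abs_rpow_two_mul (x p : ℝ) : |x| ^ (2 * p) = (x ^ 2) ^ p := by
  rw [← sq_abs, ← rpow_natCast, ← rpow_mul (abs_nonneg x)]
  norm_num

theorem rpow_one_div_two_mul_bounds {a b m p : ℝ} (ha : 0 ≤ a) (hb : 0 ≤ b) (hm : 0 ≤ m)
    (hp : 1 ≤ p) (ham : a ≤ m) (hbm : b ≤ m ^ (1 / p))
    (hmab : m ^ (1 / p) ≤ 2 ^ p * (a ^ (1 / p) + b)) :
    (2 ^ (2 * p))⁻¹ * (a ^ (1 / (2 * p)) + b ^ (1 / 2 : ℝ)) ≤ m ^ (1 / (2 * p)) ∧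
      m ^ (1 / (2 * p)) ≤ 2 ^ (2 * p) * (a ^ (1 / (2 * p)) + b ^ (1 / 2 : ℝ)) := by
  have hp0 : 0 < p := by linarith
  have hsqrt : ∀ x : ℝ, 0 ≤ x → x ^ (1 / (2 * p)) = (x ^ (1 / p)) ^ (1 / 2 : ℝ) := fun x hx => by
    rw [← rpow_mul hx]; congr 1; field_simp
  have h2 : (2 : ℝ) ≤ 2 ^ (2 * p) := by
    simpa using rpow_le_rpow_of_exponent_le one_le_two (by linarith : 1 ≤ 2 * p)
  constructor
  · have ham' : a ^ (1 / (2 * p)) ≤ m ^ (1 / (2 * p)) := by gcongr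
    have hbm' : b ^ (1 / 2 : ℝ) ≤ m ^ (1 / (2 * p)) := by rw [hsqrt m hm]; gcongr
    rw [inv_mul_le_iff₀ (by positivity)]
    nlinarith [rpow_nonneg hm (1 / (2 * p))]
  · calc m ^ (1 / (2 * p)) = (m ^ (1 / p)) ^ (1 / 2 : ℝ) := hsqrt m hm
      _ ≤ (2 ^ p * (a ^ (1 / p) + b)) ^ (1 / 2 : ℝ) := by gcongr
      _ ≤ (2 ^ p) ^ (1 / 2 : ℝ) * ((a ^ (1 / p)) ^ (1 / 2 : ℝ) + b ^ (1 / 2 : ℝ)) := by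
        rw [mul_rpow (by positivity) (by positivity)]
        gcongr
        exact rpow_add_le_add_rpow (by positivity) hb (by norm_num) (by norm_num)
      _ ≤ 2 ^ (2 * p) * (a ^ (1 / (2 * p)) + b ^ (1 / 2 : ℝ)) := by
        rw [← hsqrt a ha, ← rpow_mul zero_le_two]
        exact mul_le_mul_of_nonneg_right
          (rpow_le_rpow_of_exponent_le one_le_two (by linarith)) (by positivity)

section Rosenthal

variable {Ω : Type*} [MeasurableSpace Ω] {μ : Measure Ω}

theorem lintegral_rpow_le_rpow_lintegral [IsProbabilityMeasure μ] {f : Ω → ℝ≥0∞}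
    (hf : AEMeasurable f μ) {θ : ℝ} (h0 : 0 ≤ θ) (h1 : θ ≤ 1) :
    ∫⁻ ω, f ω ^ θ ∂μ ≤ (∫⁻ ω, f ω ∂μ) ^ θ := by
  simpa using ENNReal.lintegral_mul_norm_pow_le hf aemeasurable_const h0 (sub_nonneg.2 h1)
    (add_sub_cancel θ 1) (g := fun _ => 1)

variable {ι : Type*} [Fintype ι] {Y : ι → Ω → ℝ≥0∞} {p : ℝ}

theorem lintegral_rpow_sum_ne_top (hY : ∀ i, Measurable (Y i)) (hp : 1 ≤ p)
    (hYp : ∀ i, ∫⁻ ω, Y i ω ^ p ∂μ ≠ ∞) : ∫⁻ ω, (∑ i, Y i ω) ^ p ∂μ ≠ ∞ := by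
  refine ne_top_of_le_ne_top ?_ (lintegral_mono fun ω =>
    ENNReal.rpow_sum_le_const_mul_sum_rpow univ (Y · ω) hp)
  rw [lintegral_const_mul _ (Finset.measurable_sum _ fun i _ => (hY i).pow_const p),
    lintegral_finsetSum _ fun i _ => (hY i).pow_const p]
  exact ENNReal.mul_ne_top (ENNReal.rpow_ne_top_of_nonneg (by linarith) (by simp))
    (ENNReal.sum_ne_top.2 fun i _ => hYp i)

theorem sum_lintegral_rpow_le_lintegral_rpow_sum (hY : ∀ i, Measurable (Y i)) (hp : 1 ≤ p) :
    ∑ i, ∫⁻ ω, Y i ω ^ p ∂μ ≤ ∫⁻ ω, (∑ i, Y i ω) ^ p ∂μ := by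
  rw [← lintegral_finsetSum _ fun i _ => (hY i).pow_const p]
  exact lintegral_mono fun ω => ENNReal.sum_rpow_le_rpow_sum _ _ hp

theorem sum_lintegral_le_rpow_lintegral_rpow_sum [IsProbabilityMeasure μ]
    (hY : ∀ i, Measurable (Y i)) (hp : 1 ≤ p) :
    ∑ i, ∫⁻ ω, Y i ω ∂μ ≤ (∫⁻ ω, (∑ i, Y i ω) ^ p ∂μ) ^ (1 / p) := by
  have hp0 : 0 < p := by linarith
  rw [← lintegral_finsetSum _ fun i _ => hY i]
  calc ∫⁻ ω, ∑ i, Y i ω ∂μ = ∫⁻ ω, ((∑ i, Y i ω) ^ p) ^ (1 / p) ∂μ := by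
        simp_rw [← ENNReal.rpow_mul, mul_one_div_cancel hp0.ne', ENNReal.rpow_one]
    _ ≤ _ := lintegral_rpow_le_rpow_lintegral
        ((Finset.measurable_sum _ fun i _ => hY i).pow_const p).aemeasurable
        (by positivity) (div_le_one_of_le₀ hp (by linarith))

theorem lintegral_mul_rpow_sum_le (hY : ∀ i, Measurable (Y i)) (hindep : iIndepFun Y μ)
    (hp : 1 ≤ p) (i : ι) :
    ∫⁻ ω, Y i ω * (∑ j, Y j ω) ^ (p - 1) ∂μ ≤
      2 ^ (p - 1) * (∫⁻ ω, Y i ω ^ p ∂μ +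
        (∫⁻ ω, Y i ω ∂μ) * ∫⁻ ω, (∑ j, Y j ω) ^ (p - 1) ∂μ) := by
  classical
  set T : Ω → ℝ≥0∞ := fun ω => ∑ j ∈ univ.erase i, Y j ω
  have hT : Measurable T := Finset.measurable_sum _ fun j _ => hY j
  have hTp : Measurable fun ω => T ω ^ (p - 1) := hT.pow_const _
  have hsplit : ∀ ω, ∑ j, Y j ω = Y i ω + T ω := fun ω =>
    (Finset.add_sum_erase _ _ (mem_univ i)).symm
  have hpoint : ∀ ω, Y i ω * (∑ j, Y j ω) ^ (p - 1) ≤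
      2 ^ (p - 1) * (Y i ω ^ p + Y i ω * T ω ^ (p - 1)) := fun ω => by
    calc Y i ω * (∑ j, Y j ω) ^ (p - 1)
        ≤ Y i ω * (2 ^ (p - 1) * (Y i ω ^ (p - 1) + T ω ^ (p - 1))) := by
          rw [hsplit]
          gcongr
          exact ENNReal.add_rpow_le_two_rpow_mul_rpow_add_rpow _ _ (by linarith)
      _ = 2 ^ (p - 1) * (Y i ω ^ p + Y i ω * T ω ^ (p - 1)) := by
          rw [← ENNReal.mul_rpow_sub_one _ hp]; ring
  have hcross : ∫⁻ ω, Y i ω * T ω ^ (p - 1) ∂μ =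
      (∫⁻ ω, Y i ω ∂μ) * ∫⁻ ω, T ω ^ (p - 1) ∂μ := by
    have hTi := hindep.indepFun_finsetSum_of_notMem hY (notMem_erase i univ)
    rw [Finset.sum_fn] at hTi
    exact lintegral_mul_eq_lintegral_mul_lintegral_of_indepFun (hY i) hTp
      (hTi.symm.comp measurable_id (measurable_id.pow_const (p - 1)))
  calc ∫⁻ ω, Y i ω * (∑ j, Y j ω) ^ (p - 1) ∂μ
      ≤ ∫⁻ ω, 2 ^ (p - 1) * (Y i ω ^ p + Y i ω * T ω ^ (p - 1)) ∂μ := lintegral_mono hpoint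
    _ = 2 ^ (p - 1) * (∫⁻ ω, Y i ω ^ p ∂μ + ∫⁻ ω, Y i ω * T ω ^ (p - 1) ∂μ) := by
      rw [lintegral_const_mul' _ _ (by simp), lintegral_add_left ((hY i).pow_const p)]
    _ ≤ _ := by
      rw [hcross]
      gcongr with ω
      exact hsplit ω ▸ le_add_self

theorem lintegral_rpow_sum_le [IsProbabilityMeasure μ] (hY : ∀ i, Measurable (Y i))
    (hindep : iIndepFun Y μ) (hp : 1 ≤ p) :
    ∫⁻ ω, (∑ i, Y i ω) ^ p ∂μ ≤ 2 ^ (p - 1) * (∑ i, ∫⁻ ω, Y i ω ^ p ∂μ +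
      (∑ i, ∫⁻ ω, Y i ω ∂μ) * (∫⁻ ω, (∑ i, Y i ω) ^ p ∂μ) ^ ((p - 1) / p)) := by
  have hS : Measurable fun ω => ∑ i, Y i ω := Finset.measurable_sum _ fun i _ => hY i
  have hJensen : ∫⁻ ω, (∑ i, Y i ω) ^ (p - 1) ∂μ ≤
      (∫⁻ ω, (∑ i, Y i ω) ^ p ∂μ) ^ ((p - 1) / p) := by
    calc ∫⁻ ω, (∑ i, Y i ω) ^ (p - 1) ∂μ = ∫⁻ ω, ((∑ i, Y i ω) ^ p) ^ ((p - 1) / p) ∂μ := by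
          simp_rw [← ENNReal.rpow_mul, mul_div_cancel₀ _ (by linarith : p ≠ 0)]
      _ ≤ _ := lintegral_rpow_le_rpow_lintegral (hS.pow_const p).aemeasurable
          (div_nonneg (by linarith) (by linarith)) (div_le_one_of_le₀ (by linarith) (by linarith))
  calc ∫⁻ ω, (∑ i, Y i ω) ^ p ∂μ = ∑ i, ∫⁻ ω, Y i ω * (∑ j, Y j ω) ^ (p - 1) ∂μ := by
        rw [← lintegral_finsetSum (f := fun i ω => Y i ω * (∑ j, Y j ω) ^ (p - 1)) _
          fun i _ => (hY i).mul (hS.pow_const _)]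
        simp_rw [← Finset.sum_mul, ENNReal.mul_rpow_sub_one _ hp]
    _ ≤ ∑ i, 2 ^ (p - 1) * (∫⁻ ω, Y i ω ^ p ∂μ +
          (∫⁻ ω, Y i ω ∂μ) * ∫⁻ ω, (∑ j, Y j ω) ^ (p - 1) ∂μ) :=
        sum_le_sum fun i _ => lintegral_mul_rpow_sum_le hY hindep hp i
    _ ≤ _ := by
      rw [← mul_sum, sum_add_distrib, ← sum_mul]
      gcongr

theorem rpow_lintegral_rpow_sum_le [IsProbabilityMeasure μ] (hY : ∀ i, Measurable (Y i))
    (hindep : iIndepFun Y μ) (hp : 1 ≤ p) (hYp : ∀ i, ∫⁻ ω, Y i ω ^ p ∂μ ≠ ∞) :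
    (∫⁻ ω, (∑ i, Y i ω) ^ p ∂μ) ^ (1 / p) ≤
      2 ^ p * ((∑ i, ∫⁻ ω, Y i ω ^ p ∂μ) ^ (1 / p) + ∑ i, ∫⁻ ω, Y i ω ∂μ) := by
  have hp0 : p ≠ 0 := by linarith
  refine ENNReal.le_two_rpow_mul_of_rpow_le
    (ENNReal.rpow_ne_top_of_nonneg (by positivity) (lintegral_rpow_sum_ne_top hY hp hYp)) hp ?_
  rw [← ENNReal.rpow_mul, ← ENNReal.rpow_mul, one_div_mul_cancel hp0, ENNReal.rpow_one,
    one_div_mul_eq_div]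
  exact lintegral_rpow_sum_le hY hindep hp

end Rosenthal

section RealValued

variable {Ω : Type*} [MeasurableSpace Ω] {μ : Measure Ω} {p : ℝ}

theorem integral_rpow_eq_toReal_lintegral {f : Ω → ℝ} (hf : Measurable f) (hf0 : ∀ ω, 0 ≤ f ω)
    (hp : 0 ≤ p) : ∫ ω, f ω ^ p ∂μ = (∫⁻ ω, ENNReal.ofReal (f ω) ^ p ∂μ).toReal := by
  rw [integral_eq_lintegral_of_nonneg_ae (ae_of_all _ fun ω => rpow_nonneg (hf0 ω) p)
    (hf.pow_const p).aestronglyMeasurable]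
  simp_rw [ENNReal.ofReal_rpow_of_nonneg (hf0 _) hp]

theorem rosenthal_of_nonneg [IsProbabilityMeasure μ] {ι : Type*} [Fintype ι] {X : ι → Ω → ℝ}
    (hX : ∀ i, Measurable (X i)) (hX0 : ∀ i ω, 0 ≤ X i ω) (hindep : iIndepFun X μ) (hp : 1 ≤ p)
    (hint : ∀ i, Integrable (fun ω => X i ω ^ p) μ) :
    ∑ i, ∫ ω, X i ω ^ p ∂μ ≤ ∫ ω, (∑ i, X i ω) ^ p ∂μ ∧
      ∑ i, ∫ ω, X i ω ∂μ ≤ (∫ ω, (∑ i, X i ω) ^ p ∂μ) ^ (1 / p) ∧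
      (∫ ω, (∑ i, X i ω) ^ p ∂μ) ^ (1 / p) ≤
        2 ^ p * ((∑ i, ∫ ω, X i ω ^ p ∂μ) ^ (1 / p) + ∑ i, ∫ ω, X i ω ∂μ) := by
  set Y : ι → Ω → ℝ≥0∞ := fun i ω => ENNReal.ofReal (X i ω)
  have hY : ∀ i, Measurable (Y i) := fun i => (hX i).ennreal_ofReal
  have hYp : ∀ i, ∫⁻ ω, Y i ω ^ p ∂μ ≠ ∞ := fun i => by
    simpa only [Y, ENNReal.ofReal_rpow_of_nonneg (hX0 i _) (by linarith : 0 ≤ p)]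
      using (hint i).lintegral_lt_top.ne
  have hS_ne_top := lintegral_rpow_sum_ne_top hY hp hYp
  have hS_rpow_ne_top := ENNReal.rpow_ne_top_of_nonneg (by positivity : 0 ≤ 1 / p) hS_ne_top
  have hA_le := sum_lintegral_rpow_le_lintegral_rpow_sum (μ := μ) hY hp
  have hB_le := sum_lintegral_le_rpow_lintegral_rpow_sum (μ := μ) hY hp
  have hA_ne_top := ne_top_of_le_ne_top hS_ne_top hA_le
  have hB_ne_top := ne_top_of_le_ne_top hS_rpow_ne_top hB_le
  have hA_eq : ∑ i, ∫ ω, X i ω ^ p ∂μ = (∑ i, ∫⁻ ω, Y i ω ^ p ∂μ).toReal := by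
    rw [ENNReal.toReal_sum fun i _ => hYp i]
    exact sum_congr rfl fun i _ => integral_rpow_eq_toReal_lintegral (hX i) (hX0 i) (by linarith)
  have hB_eq : ∑ i, ∫ ω, X i ω ∂μ = (∑ i, ∫⁻ ω, Y i ω ∂μ).toReal := by
    rw [ENNReal.toReal_sum (ENNReal.sum_ne_top.1 hB_ne_top)]
    exact sum_congr rfl fun i _ => integral_eq_lintegral_of_nonneg_ae (ae_of_all _ (hX0 i))
      (hX i).aestronglyMeasurable
  have hS_eq : ∫ ω, (∑ i, X i ω) ^ p ∂μ = (∫⁻ ω, (∑ i, Y i ω) ^ p ∂μ).toReal := by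
    rw [integral_rpow_eq_toReal_lintegral (Finset.measurable_sum _ fun i _ => hX i)
      (fun ω => sum_nonneg fun i _ => hX0 i ω) (by linarith)]
    simp_rw [Y, ENNReal.ofReal_sum_of_nonneg fun i _ => hX0 i _]
  rw [hA_eq, hB_eq, hS_eq, ENNReal.toReal_rpow, ENNReal.toReal_rpow]
  refine ⟨ENNReal.toReal_mono hS_ne_top hA_le, ENNReal.toReal_mono hS_rpow_ne_top hB_le, ?_⟩
  have hYind : iIndepFun Y μ := hindep.comp _ fun _ => ENNReal.measurable_ofReal
  have := ENNReal.toReal_mono (by finiteness) (rpow_lintegral_rpow_sum_le hY hYind hp hYp)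
  rwa [ENNReal.toReal_mul, ENNReal.toReal_add (by finiteness) hB_ne_top, ← ENNReal.toReal_rpow 2,
    ENNReal.toReal_ofNat] at this

end RealValued

/-- **Rosenthal's inequality in square-function form (Sp2)**: for `2 ≤ s < ∞` there is a
constant `C`, depending only on `s`, such that for every probability space and every independent
family `g₁, …, gₙ` in `L_s`, one has
`(∫ (Σ g_k²)^{s/2})^{1/s} ≈ (Σ ‖g_k‖_s^s)^{1/s} + (Σ ‖g_k‖_2²)^{1/2}`. -/
theorem stmt_1 (s : ℝ) (hs : 2 ≤ s) :
    ∃ C : ℝ, 1 ≤ C ∧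
      ∀ (Ω : Type) (_ : MeasurableSpace Ω) (μ : Measure Ω), IsProbabilityMeasure μ →
        ∀ (n : ℕ), 1 ≤ n →
          ∀ g : Fin n → Ω → ℝ,
            (∀ k, Measurable (g k)) →
            (∀ k, Integrable (fun ω => |g k ω| ^ s) μ) →
            iIndepFun g μ →
            C⁻¹ * ((∑ k, ∫ ω, |g k ω| ^ s ∂μ) ^ (1 / s)
                  + (∑ k, ∫ ω, (g k ω) ^ 2 ∂μ) ^ (1 / 2 : ℝ))
                ≤ (∫ ω, (∑ k, (g k ω) ^ 2) ^ (s / 2) ∂μ) ^ (1 / s) ∧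
              (∫ ω, (∑ k, (g k ω) ^ 2) ^ (s / 2) ∂μ) ^ (1 / s)
                ≤ C * ((∑ k, ∫ ω, |g k ω| ^ s ∂μ) ^ (1 / s)
                  + (∑ k, ∫ ω, (g k ω) ^ 2 ∂μ) ^ (1 / 2 : ℝ)) := by
  obtain ⟨p, rfl⟩ : ∃ p, s = 2 * p := ⟨s / 2, by ring⟩
  have hp : 1 ≤ p := by linarith
  refine ⟨2 ^ (2 * p), one_le_rpow one_le_two (by linarith), ?_⟩
  intro Ω _ μ _ n _ g hg hint hindep
  simp_rw [mul_div_cancel_left₀ p two_ne_zero, abs_rpow_two_mul] at hint ⊢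
  obtain ⟨hA_le, hB_le, hS_le⟩ := rosenthal_of_nonneg (fun k => (hg k).pow_const 2)
    (fun k ω => sq_nonneg (g k ω)) (hindep.comp _ fun _ => measurable_id.pow_const 2) hp hint
  exact rpow_one_div_two_mul_bounds (sum_nonneg fun k _ => integral_nonneg fun ω => by positivity)
    (sum_nonneg fun k _ => integral_nonneg fun ω => sq_nonneg _)
    (integral_nonneg fun ω => by positivity) hp hA_le hB_le hS_le
end

section
/- Let λ > 0, and let m, s be positive integers with s ≥ λ. Let ν be a probability distribution on ℝ with finite absolute m-th moment and write m_ℓ = ∫ x^ℓ dν(x) for ℓ ≤ m. On some probability space let B_1, …, B_s, ε_1, …, ε_s, X_1, …, X_s be mutually independent random variables, where each B_j is Bernoulli with P(B_j = 1) = λ/s, each ε_j is uniform on {−1, 1}, and each X_j has distribution ν. Then E[ ( Σ_{j=1}^s B_j ε_j X_j )^m ] = Σ_{σ ∈ Π_e(m)} [ s! / ( s^{|σ|} (s − |σ|)! ) ] · λ^{|σ|} · Π_{k=1}^{|σ|} m_{|σ_k|}, where the sum runs over all even partitions σ of {1, …, m} with blocks σ_1, …, σ_{|σ|}. -/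
/-!
Expanding the `m`-th power over all maps `f : {1, …, m} → {1, …, s}` and using independence, the
term of `f` factors as `∏_j E[B_j^{c_j}] E[ε_j^{c_j}] E[X_j^{c_j}]` with `c_j = |f⁻¹(j)|`. Such a
factor is `1` when `c_j = 0`, vanishes when `c_j` is odd and equals `(λ/s) m_{c_j}` otherwise, so
the term only depends on the partition of `{1, …, m}` into the nonempty fibres of `f`. The maps
inducing a given partition `σ` correspond to the injections of its blocks into `{1, …, s}`: there
are `s (s - 1) ⋯ (s - |σ| + 1)` of them.
-/

open MeasureTheory ProbabilityTheory Real BigOperators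

/-- `P` is (the set of blocks of) a partition of `{1, …, m}` (i.e. of `Fin m`): all blocks are
nonempty, pairwise disjoint, and cover everything. -/
def IsPartitionFinset (m : ℕ) (P : Finset (Finset (Fin m))) : Prop :=
  (∀ b ∈ P, b.Nonempty) ∧
  (∀ b ∈ P, ∀ b' ∈ P, b ≠ b' → Disjoint b b') ∧
  (∀ i : Fin m, ∃ b ∈ P, i ∈ b)

instance (m : ℕ) (P : Finset (Finset (Fin m))) : Decidable (IsPartitionFinset m P) := by
  unfold IsPartitionFinset; infer_instance

open Finset
open scoped ENNReal

namespace IsPartitionFinset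

variable {m : ℕ} {P : Finset (Finset (Fin m))} {b b' : Finset (Fin m)} {i : Fin m}

lemma eq_of_mem_of_mem (hP : IsPartitionFinset m P) (hb : b ∈ P) (hb' : b' ∈ P) (hi : i ∈ b)
    (hi' : i ∈ b') : b = b' := by
  by_contra hne
  exact disjoint_left.mp (hP.2.1 b hb b' hb' hne) hi hi'

noncomputable def block (hP : IsPartitionFinset m P) (i : Fin m) : Finset (Fin m) :=
  (hP.2.2 i).choose

lemma block_mem (hP : IsPartitionFinset m P) (i : Fin m) : hP.block i ∈ P :=
  (hP.2.2 i).choose_spec.1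

lemma mem_block (hP : IsPartitionFinset m P) (i : Fin m) : i ∈ hP.block i :=
  (hP.2.2 i).choose_spec.2

lemma block_eq (hP : IsPartitionFinset m P) (hb : b ∈ P) (hi : i ∈ b) : hP.block i = b :=
  hP.eq_of_mem_of_mem (hP.block_mem i) hb (hP.mem_block i) hi

end IsPartitionFinset

section Fibers

variable {m : ℕ} {β : Type*} [DecidableEq β]

def fiber (f : Fin m → β) (j : β) : Finset (Fin m) := {i | f i = j}

@[simp]
lemma mem_fiber {f : Fin m → β} {j : β} {i : Fin m} : i ∈ fiber f j ↔ f i = j := by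
  simp [fiber]

lemma sum_pow_eq_sum_prod_pow_card_fiber {R : Type*} [Fintype β] [CommSemiring R] (y : β → R)
    (m : ℕ) : (∑ j, y j) ^ m = ∑ f : Fin m → β, ∏ j, y j ^ #(fiber f j) := by
  rw [sum_pow', Fintype.piFinset_univ]
  refine sum_congr rfl fun f _ => ?_
  rw [← prod_fiberwise' univ f y]
  exact prod_congr rfl fun j _ => prod_const _

variable [Fintype β]

def fiberPartition (f : Fin m → β) : Finset (Finset (Fin m)) :=
  {b ∈ univ.image (fiber f) | b.Nonempty}

lemma mem_fiberPartition {f : Fin m → β} {b : Finset (Fin m)} :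
    b ∈ fiberPartition f ↔ (∃ j, fiber f j = b) ∧ b.Nonempty := by
  simp [fiberPartition]

lemma fiber_mem_fiberPartition (f : Fin m → β) (i : Fin m) : fiber f (f i) ∈ fiberPartition f :=
  mem_fiberPartition.2 ⟨⟨f i, rfl⟩, i, mem_fiber.2 rfl⟩

lemma isPartitionFinset_fiberPartition (f : Fin m → β) :
    IsPartitionFinset m (fiberPartition f) := by
  refine ⟨fun b hb => (mem_fiberPartition.1 hb).2, ?_,
    fun i => ⟨_, fiber_mem_fiberPartition f i, mem_fiber.2 rfl⟩⟩
  intro b hb b' hb' hne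
  obtain ⟨⟨j, rfl⟩, -⟩ := mem_fiberPartition.1 hb
  obtain ⟨⟨j', rfl⟩, -⟩ := mem_fiberPartition.1 hb'
  refine disjoint_left.2 fun i hi hi' => hne ?_
  rw [← mem_fiber.1 hi, ← mem_fiber.1 hi']

lemma prod_card_fiber_eq_prod_fiberPartition {M : Type*} [CommMonoid M] {T : ℕ → M}
    (hT : T 0 = 1) (f : Fin m → β) :
    ∏ j, T #(fiber f j) = ∏ b ∈ fiberPartition f, T #b := by
  rw [fiberPartition, filter_image, prod_image, prod_filter_of_ne]
  · intro j _ h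
    exact nonempty_iff_ne_empty.2 fun h0 => h (by rw [h0, card_empty, hT])
  · intro j hj j' _ h
    obtain ⟨i, hi⟩ := (mem_filter.1 hj).2
    rw [← mem_fiber.1 hi, ← mem_fiber.1 (h ▸ hi : i ∈ fiber f j')]

lemma fiber_eq_of_fiberPartition_eq {f : Fin m → β} {P : Finset (Finset (Fin m))}
    (hf : fiberPartition f = P) (hP : IsPartitionFinset m P) {b : Finset (Fin m)} (hb : b ∈ P)
    {i : Fin m} (hi : i ∈ b) : fiber f (f i) = b :=
  hP.eq_of_mem_of_mem (hf ▸ fiber_mem_fiberPartition f i) hb (mem_fiber.2 rfl) hi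

lemma fiberPartition_comp_block {P : Finset (Finset (Fin m))} (hP : IsPartitionFinset m P)
    (g : P ↪ β) : fiberPartition (fun i => g ⟨hP.block i, hP.block_mem i⟩) = P := by
  have hfiber : ∀ b (hb : b ∈ P),
      fiber (fun i => g ⟨hP.block i, hP.block_mem i⟩) (g ⟨b, hb⟩) = b := by
    intro b hb
    ext i
    rw [mem_fiber, g.injective.eq_iff, Subtype.mk.injEq]
    exact ⟨fun h => h ▸ hP.mem_block i, hP.block_eq hb⟩
  ext b
  refine ⟨fun hb => ?_, fun hb => mem_fiberPartition.2 ⟨⟨_, hfiber b hb⟩, hP.1 b hb⟩⟩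
  obtain ⟨⟨j, rfl⟩, i, hi⟩ := mem_fiberPartition.1 hb
  rw [← mem_fiber.1 hi, hfiber]
  exact hP.block_mem i

lemma card_filter_fiberPartition_eq {P : Finset (Finset (Fin m))} (hP : IsPartitionFinset m P) :
    #{f : Fin m → β | fiberPartition f = P} = (Fintype.card β).descFactorial #P := by
  rw [← Fintype.card_subtype, ← Fintype.card_coe P, ← Fintype.card_embedding_eq]
  refine Fintype.card_congr
    { toFun := fun f => ⟨fun b => f.1 (b.1.min' (hP.1 b b.2)), fun b b' h => ?_⟩
      invFun := fun g => ⟨fun i => g ⟨hP.block i, hP.block_mem i⟩, fiberPartition_comp_block hP g⟩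
      left_inv := fun f => ?_
      right_inv := fun g => ?_ }
  · have hmin : ∀ c : P, fiber f.1 (f.1 (c.1.min' (hP.1 c c.2))) = c.1 := fun c =>
      fiber_eq_of_fiberPartition_eq f.2 hP c.2 (c.1.min'_mem _)
    exact Subtype.ext (by rw [← hmin b, ← hmin b']; exact congrArg _ h)
  · refine Subtype.ext (funext fun i => ?_)
    have hb := fiber_eq_of_fiberPartition_eq f.2 hP (hP.block_mem i)
      ((hP.block i).min'_mem (hP.1 _ (hP.block_mem i)))
    exact (mem_fiber.1 (hb ▸ hP.mem_block i)).symm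
  · refine DFunLike.ext _ _ fun b => congrArg g (Subtype.ext ?_)
    exact hP.block_eq b.2 (b.1.min'_mem _)

lemma sum_prod_card_fiber_eq_sum_partitions {M : Type*} [CommSemiring M] {T : ℕ → M}
    (hT : T 0 = 1) :
    ∑ f : Fin m → β, ∏ j, T #(fiber f j)
      = ∑ P with IsPartitionFinset m P, (Fintype.card β).descFactorial #P * ∏ b ∈ P, T #b := by
  rw [← sum_fiberwise_of_maps_to (g := fiberPartition)
    fun f _ => mem_filter.2 ⟨mem_univ _, isPartitionFinset_fiberPartition f⟩]
  refine sum_congr rfl fun P hP => ?_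
  rw [sum_congr rfl fun f hf => (prod_card_fiber_eq_prod_fiberPartition hT f).trans
      (congrArg (∏ b ∈ ·, T #b) (mem_filter.1 hf).2),
    sum_const, card_filter_fiberPartition_eq (mem_filter.1 hP).2, nsmul_eq_mul]

lemma sum_prod_card_fiber_eq_sum_even_partitions {M : Type*} [CommSemiring M] {T : ℕ → M}
    (hT : T 0 = 1) (hodd : ∀ c, Odd c → T c = 0) :
    ∑ f : Fin m → β, ∏ j, T #(fiber f j)
      = ∑ P with IsPartitionFinset m P ∧ ∀ b ∈ P, Even #b,
          (Fintype.card β).descFactorial #P * ∏ b ∈ P, T #b := by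
  rw [sum_prod_card_fiber_eq_sum_partitions hT]
  refine (sum_subset (fun P hP => ?_) fun P hP hPe => ?_).symm
  · simp only [mem_filter, mem_univ, true_and] at hP ⊢
    exact hP.1
  · simp only [mem_filter, mem_univ, true_and, not_and, not_forall, Nat.not_even_iff_odd] at hP hPe
    obtain ⟨b, hb, hodd_b⟩ := hPe hP
    rw [prod_eq_zero hb (hodd _ hodd_b), mul_zero]

end Fibers

section Moments

variable {Ω : Type*} [MeasurableSpace Ω] {μ : Measure Ω}

lemma integrable_pow_of_integrable_abs_pow [IsFiniteMeasure μ] {f : Ω → ℝ}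
    (hf : AEStronglyMeasurable f μ) {m c : ℕ} (hc : c ≤ m)
    (h : Integrable (fun ω => |f ω| ^ m) μ) : Integrable (fun ω => f ω ^ c) μ := by
  refine (integrable_norm_iff (hf.pow c)).1 ?_
  simpa [abs_pow] using integrable_norm_pow_of_le hf hc (by simpa using h)

section TwoPoint

variable {a b : ℝ≥0∞} {x y : ℝ} {Y : Ω → ℝ}

lemma integrable_smul_dirac_add_smul_dirac {g : ℝ → ℝ} (ha : a ≠ ∞) (hb : b ≠ ∞) :
    Integrable g (a • Measure.dirac x + b • Measure.dirac y) :=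
  ((integrable_dirac (by simp)).smul_measure ha).add_measure
    ((integrable_dirac (by simp)).smul_measure hb)

lemma integral_smul_dirac_add_smul_dirac {g : ℝ → ℝ} (ha : a ≠ ∞) (hb : b ≠ ∞) :
    ∫ z, g z ∂(a • Measure.dirac x + b • Measure.dirac y) = a.toReal * g x + b.toReal * g y := by
  rw [integral_add_measure ((integrable_dirac (by simp)).smul_measure ha)
    ((integrable_dirac (by simp)).smul_measure hb), integral_smul_measure, integral_smul_measure,
    integral_dirac, integral_dirac, smul_eq_mul, smul_eq_mul]

lemma integrable_pow_of_map_eq_smul_dirac_add_smul_dirac (hY : AEMeasurable Y μ) (ha : a ≠ ∞)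
    (hb : b ≠ ∞) (h : μ.map Y = a • Measure.dirac x + b • Measure.dirac y) (c : ℕ) :
    Integrable (fun ω => Y ω ^ c) μ :=
  (integrable_map_measure (continuous_pow c).aestronglyMeasurable hY).1
    (h ▸ integrable_smul_dirac_add_smul_dirac ha hb)

lemma integral_pow_of_map_eq_smul_dirac_add_smul_dirac (hY : AEMeasurable Y μ) (ha : a ≠ ∞)
    (hb : b ≠ ∞) (h : μ.map Y = a • Measure.dirac x + b • Measure.dirac y) (c : ℕ) :
    ∫ ω, Y ω ^ c ∂μ = a.toReal * x ^ c + b.toReal * y ^ c := by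
  rw [← integral_map (f := fun z : ℝ => z ^ c) hY (continuous_pow c).aestronglyMeasurable, h,
    integral_smul_dirac_add_smul_dirac ha hb]

lemma integral_pow_of_map_eq_bernoulli (hY : AEMeasurable Y μ) {p : ℝ} (hp0 : 0 ≤ p)
    (hp1 : p ≤ 1)
    (h : μ.map Y = ENNReal.ofReal (1 - p) • Measure.dirac 0 + ENNReal.ofReal p • Measure.dirac 1)
    (c : ℕ) : ∫ ω, Y ω ^ c ∂μ = if c = 0 then 1 else p := by
  rw [integral_pow_of_map_eq_smul_dirac_add_smul_dirac hY ENNReal.ofReal_ne_top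
    ENNReal.ofReal_ne_top h, ENNReal.toReal_ofReal (sub_nonneg.2 hp1), ENNReal.toReal_ofReal hp0]
  split_ifs with hc <;> simp [hc]

lemma integral_pow_of_map_eq_rademacher (hY : AEMeasurable Y μ)
    (h : μ.map Y = (2 : ℝ≥0∞)⁻¹ • Measure.dirac (-1) + (2 : ℝ≥0∞)⁻¹ • Measure.dirac 1) (c : ℕ) :
    ∫ ω, Y ω ^ c ∂μ = if Even c then 1 else 0 := by
  rw [integral_pow_of_map_eq_smul_dirac_add_smul_dirac hY (by simp) (by simp) h]
  rcases Nat.even_or_odd c with hc | hc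
  · norm_num [hc.neg_one_pow, hc]
  · simp [hc.neg_one_pow, Nat.not_even_iff_odd.2 hc]

end TwoPoint

lemma ProbabilityTheory.iIndepFun.integrable_fun_finsetProd {ι : Type*} {Z : ι → Ω → ℝ}
    (hZ : iIndepFun Z μ) (hmeas : ∀ i, Measurable (Z i)) (t : Finset ι)
    (hint : ∀ i ∈ t, Integrable (Z i) μ) : Integrable (fun ω => ∏ i ∈ t, Z i ω) μ := by
  classical
  have := hZ.isProbabilityMeasure
  induction t using Finset.cons_induction with
  | empty => simp
  | cons i t hi ih =>
    have hindep : IndepFun (∏ j ∈ t, Z j) (Z i) μ := hZ.indepFun_finsetProd_of_notMem hmeas hi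
    have hprod := ih fun j hj => hint j (mem_cons_of_mem hj)
    rw [← Finset.prod_fn] at hprod ⊢
    rw [prod_cons, mul_comm]
    exact hindep.integrable_mul hprod (hint i (mem_cons_self i t))

lemma integral_pow_sum_mul_mul {κ : Type*} [Fintype κ] [DecidableEq κ] {B e X : κ → Ω → ℝ}
    {m : ℕ} (hindep : iIndepFun (Sum.elim B (Sum.elim e X)) μ)
    (hBmeas : ∀ j, Measurable (B j)) (hemeas : ∀ j, Measurable (e j))
    (hXmeas : ∀ j, Measurable (X j))
    (hBint : ∀ j c, c ≤ m → Integrable (fun ω => B j ω ^ c) μ)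
    (heint : ∀ j c, c ≤ m → Integrable (fun ω => e j ω ^ c) μ)
    (hXint : ∀ j c, c ≤ m → Integrable (fun ω => X j ω ^ c) μ) :
    ∫ ω, (∑ j, B j ω * e j ω * X j ω) ^ m ∂μ
      = ∑ f : Fin m → κ, ∏ j, (∫ ω, B j ω ^ #(fiber f j) ∂μ) * (∫ ω, e j ω ^ #(fiber f j) ∂μ)
          * ∫ ω, X j ω ^ #(fiber f j) ∂μ := by
  set Z := Sum.elim B (Sum.elim e X)
  let d : (Fin m → κ) → κ ⊕ κ ⊕ κ → ℕ := fun f =>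
    Sum.elim (fun j => #(fiber f j)) (Sum.elim (fun j => #(fiber f j)) fun j => #(fiber f j))
  have hregroup : ∀ f ω, ∏ j, (B j ω * e j ω * X j ω) ^ #(fiber f j) = ∏ k, Z k ω ^ d f k := by
    intro f ω
    simp [Z, d, Fintype.prod_sum_type, mul_pow, prod_mul_distrib, mul_assoc]
  have hmeas : ∀ k, Measurable (Z k) := by
    rintro (j | j | j)
    exacts [hBmeas j, hemeas j, hXmeas j]
  have hint : ∀ f k, Integrable (fun ω => Z k ω ^ d f k) μ := by
    have hcard : ∀ (f : Fin m → κ) j, #(fiber f j) ≤ m := fun f j =>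
      (card_le_univ _).trans_eq (Fintype.card_fin m)
    rintro f (j | j | j)
    exacts [hBint j _ (hcard f j), heint j _ (hcard f j), hXint j _ (hcard f j)]
  have hpow : ∀ f, iIndepFun (fun k ω => Z k ω ^ d f k) μ := fun f =>
    hindep.comp (fun k x => x ^ d f k) fun k => measurable_id.pow_const _
  simp_rw [sum_pow_eq_sum_prod_pow_card_fiber, hregroup]
  rw [integral_finsetSum _ fun f _ => (hpow f).integrable_fun_finsetProd
    (fun k => (hmeas k).pow_const _) univ fun k _ => hint f k]
  refine sum_congr rfl fun f _ => ?_
  rw [hindep.integral_fun_prod_comp (f := fun k x => x ^ d f k) (fun k => (hmeas k).aemeasurable)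
    fun k => (measurable_id.pow_const _).aestronglyMeasurable]
  simp [Z, d, Fintype.prod_sum_type, prod_mul_distrib, mul_assoc]

end Moments

theorem stmt_4_general (lam : ℝ) (hlam : 0 < lam) (m s : ℕ)
    (hs : lam ≤ (s : ℝ))
    (ν : Measure ℝ) [IsProbabilityMeasure ν]
    (hmom : Integrable (fun x => |x| ^ m) ν)
    (Ω : Type) [MeasurableSpace Ω] (μ : Measure Ω)
    (B e X : Fin s → Ω → ℝ)
    (hBmeas : ∀ j, Measurable (B j)) (hemeas : ∀ j, Measurable (e j))
    (hXmeas : ∀ j, Measurable (X j))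
    (hindep : iIndepFun (Sum.elim B (Sum.elim e X)) μ)
    (hB : ∀ j, Measure.map (B j) μ
      = ENNReal.ofReal (1 - lam / s) • Measure.dirac (0 : ℝ)
        + ENNReal.ofReal (lam / s) • Measure.dirac (1 : ℝ))
    (he : ∀ j, Measure.map (e j) μ
      = (2 : ENNReal)⁻¹ • Measure.dirac (-1 : ℝ) + (2 : ENNReal)⁻¹ • Measure.dirac (1 : ℝ))
    (hX : ∀ j, Measure.map (X j) μ = ν) :
    ∫ ω, (∑ j, B j ω * e j ω * X j ω) ^ m ∂μ
      = ∑ P ∈ Finset.univ.filter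
          (fun P : Finset (Finset (Fin m)) =>
            IsPartitionFinset m P ∧ ∀ b ∈ P, Even b.card),
          ((s.descFactorial P.card : ℝ) / (s : ℝ) ^ P.card) * lam ^ P.card
            * ∏ b ∈ P, ∫ x, x ^ b.card ∂ν := by
  have hp0 : 0 ≤ lam / s := div_nonneg hlam.le s.cast_nonneg
  have hp1 : lam / s ≤ 1 := div_le_one_of_le₀ hs s.cast_nonneg
  have hXint : ∀ j c, c ≤ m → Integrable (fun ω => X j ω ^ c) μ := fun j c hc =>
    (integrable_map_measure (continuous_pow c).aestronglyMeasurable (hXmeas j).aemeasurable).1 <|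
      hX j ▸ integrable_pow_of_integrable_abs_pow aestronglyMeasurable_id hc hmom
  set T : ℕ → ℝ := fun c =>
    (if c = 0 then 1 else lam / s) * (if Even c then 1 else 0) * ∫ x, x ^ c ∂ν
  have hmoment : ∀ j c, (∫ ω, B j ω ^ c ∂μ) * (∫ ω, e j ω ^ c ∂μ) * ∫ ω, X j ω ^ c ∂μ = T c := by
    intro j c
    rw [integral_pow_of_map_eq_bernoulli (hBmeas j).aemeasurable hp0 hp1 (hB j),
      integral_pow_of_map_eq_rademacher (hemeas j).aemeasurable (he j),
      ← integral_map (f := fun x : ℝ => x ^ c) (hXmeas j).aemeasurable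
        (continuous_pow c).aestronglyMeasurable, hX j]
  rw [integral_pow_sum_mul_mul hindep hBmeas hemeas hXmeas
    (fun j c _ => integrable_pow_of_map_eq_smul_dirac_add_smul_dirac (hBmeas j).aemeasurable
      ENNReal.ofReal_ne_top ENNReal.ofReal_ne_top (hB j) c)
    (fun j c _ => integrable_pow_of_map_eq_smul_dirac_add_smul_dirac (hemeas j).aemeasurable
      (by simp) (by simp) (he j) c) hXint]
  simp_rw [hmoment]
  rw [sum_prod_card_fiber_eq_sum_even_partitions (by simp [T])
    fun c hc => by simp [T, Nat.not_even_iff_odd.2 hc]]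
  refine sum_congr rfl fun P hP => ?_
  obtain ⟨hPpart, hPeven⟩ := (mem_filter.1 hP).2
  have hblock : ∀ b ∈ P, T #b = lam / s * ∫ x, x ^ #b ∂ν := fun b hb => by
    simp [T, (hPpart.1 b hb).card_ne_zero, hPeven b hb]
  rw [prod_congr rfl hblock, prod_mul_distrib, prod_const, Fintype.card_fin, div_pow]
  ring

/-- **Moment formula for Bernoulli-thinned symmetrized sums** (the scalar instance of the moment
computation in the proof of Theorem 4.8 of the paper): if `B₁, …, B_s, ε₁, …, ε_s, X₁, …, X_s`
are mutually independent with `B_j` Bernoulli of parameter `λ/s`, `ε_j` uniform on `{-1, 1}` and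
`X_j` distributed as `ν`, then
`E[(Σ_j B_j ε_j X_j)^m] = Σ_{σ even partition of {1,…,m}} s!/(s^{|σ|}(s-|σ|)!) · λ^{|σ|} ·
Π_k m_{|σ_k|}`, where `m_ℓ = ∫ x^ℓ dν` and `s!/(s-r)!` is the falling factorial
`s(s-1)⋯(s-r+1)`. -/
theorem stmt_4 (lam : ℝ) (hlam : 0 < lam) (m s : ℕ) (hm : 0 < m) (hs0 : 0 < s)
    (hs : lam ≤ (s : ℝ))
    (ν : Measure ℝ) [IsProbabilityMeasure ν]
    (hmom : Integrable (fun x => |x| ^ m) ν)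
    (Ω : Type) [MeasurableSpace Ω] (μ : Measure Ω) [IsProbabilityMeasure μ]
    (B e X : Fin s → Ω → ℝ)
    (hBmeas : ∀ j, Measurable (B j)) (hemeas : ∀ j, Measurable (e j))
    (hXmeas : ∀ j, Measurable (X j))
    (hindep : iIndepFun (Sum.elim B (Sum.elim e X)) μ)
    (hB : ∀ j, Measure.map (B j) μ
      = ENNReal.ofReal (1 - lam / s) • Measure.dirac (0 : ℝ)
        + ENNReal.ofReal (lam / s) • Measure.dirac (1 : ℝ))
    (he : ∀ j, Measure.map (e j) μ
      = (2 : ENNReal)⁻¹ • Measure.dirac (-1 : ℝ) + (2 : ENNReal)⁻¹ • Measure.dirac (1 : ℝ))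
    (hX : ∀ j, Measure.map (X j) μ = ν) :
    ∫ ω, (∑ j, B j ω * e j ω * X j ω) ^ m ∂μ
      = ∑ P ∈ Finset.univ.filter
          (fun P : Finset (Finset (Fin m)) =>
            IsPartitionFinset m P ∧ ∀ b ∈ P, Even b.card),
          ((s.descFactorial P.card : ℝ) / (s : ℝ) ^ P.card) * lam ^ P.card
            * ∏ b ∈ P, ∫ x, x ^ b.card ∂ν :=
  stmt_4_general lam hlam m s hs ν hmom Ω μ B e X hBmeas hemeas hXmeas hindep hB he hX
end

section
/- Let 1 ≤ q ≤ p < ∞. There exists a constant C ≥ 1 depending only on p and q such that for every probability space (Ω, μ), every real-valued f ∈ L_p(Ω, μ), every n ≥ 1, and every independent family f_1, …, f_n of random variables each having the same distribution as f, one has C^{-1} max( n^{1/p} ‖f‖_{L_p}, n^{1/q} ‖f‖_{L_q} ) ≤ ( ∫_Ω (Σ_{k=1}^n |f_k|^q)^{p/q} dμ )^{1/p} ≤ C max( n^{1/p} ‖f‖_{L_p}, n^{1/q} ‖f‖_{L_q} ). -/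
open MeasureTheory ProbabilityTheory Real BigOperators Finset

/-!
Put `X_k = |f_k|^q` and `r = p/q ≥ 1`; the middle term is `m^{1/p}` with `m = 𝔼 (∑ X_k)^r`.
For the lower bound, `∑ X_k^r ≤ (∑ X_k)^r` pointwise gives `n 𝔼|f|^p ≤ m`, and Jensen gives
`n 𝔼|f|^q = 𝔼 ∑ X_k ≤ m^{1/r}`.
The upper bound is a Rosenthal-type inequality for nonnegative independent variables: with
`S = ∑ X_k` and `S_i = S - X_i` one has `S^r = ∑ X_i S^{r-1} ≤ 2^{r-1} ∑ (X_i^r + X_i S_i^{r-1})`.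
Independence of `X_i` and `S_i`, then Jensen, bound `𝔼 X_i S_i^{r-1}` by `𝔼 X_i · m^{(r-1)/r}`,
so `m ≤ 2^{r-1} (B + A m^{1-1/r})` with `A = ∑ 𝔼 X_k`, `B = ∑ 𝔼 X_k^r`, which forces
`m ≤ max ((2^r A)^r) (2^r B)`.
-/

lemma rpow_le_one_add_rpow {x t s : ℝ} (hx : 0 ≤ x) (ht : 0 ≤ t) (hts : t ≤ s) :
    x ^ t ≤ 1 + x ^ s := by
  rcases le_total x 1 with h | h
  · linarith [rpow_le_one hx h ht, rpow_nonneg hx s]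
  · linarith [rpow_le_rpow_of_exponent_le h hts, rpow_nonneg hx t]

lemma add_rpow_le_two_rpow_mul {a b t : ℝ} (ha : 0 ≤ a) (hb : 0 ≤ b) (ht : 0 ≤ t) :
    (a + b) ^ t ≤ 2 ^ t * (a ^ t + b ^ t) :=
  calc (a + b) ^ t ≤ (2 * max a b) ^ t := by
        gcongr; linarith [le_max_left a b, le_max_right a b]
    _ = 2 ^ t * max (a ^ t) (b ^ t) := by
        rw [mul_rpow zero_le_two (by positivity), rpow_max ha hb ht]
    _ ≤ 2 ^ t * (a ^ t + b ^ t) := by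
      gcongr; exact max_le_add_of_nonneg (rpow_nonneg ha t) (rpow_nonneg hb t)

lemma rpow_sub_one_mul_self {x r : ℝ} (hx : 0 ≤ x) (hr : 1 ≤ r) :
    x ^ (r - 1) * x = x ^ r := by
  rcases hx.eq_or_lt with rfl | hx
  · rw [mul_zero, zero_rpow (by linarith)]
  · rw [← rpow_add_one hx.ne', sub_add_cancel]

lemma mul_add_rpow_sub_one_le {x s r : ℝ} (hx : 0 ≤ x) (hs : 0 ≤ s) (hr : 1 ≤ r) :
    x * (x + s) ^ (r - 1) ≤ 2 ^ (r - 1) * (x ^ r + x * s ^ (r - 1)) :=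
  calc x * (x + s) ^ (r - 1) ≤ x * (2 ^ (r - 1) * (x ^ (r - 1) + s ^ (r - 1))) := by
        gcongr; exact add_rpow_le_two_rpow_mul hx hs (by linarith)
    _ = 2 ^ (r - 1) * (x ^ (r - 1) * x + x * s ^ (r - 1)) := by ring
    _ = 2 ^ (r - 1) * (x ^ r + x * s ^ (r - 1)) := by rw [rpow_sub_one_mul_self hx hr]

lemma sum_rpow_le_rpow_sum {ι : Type*} (s : Finset ι) {a : ι → ℝ} {r : ℝ} (hr : 1 ≤ r)
    (ha : ∀ i ∈ s, 0 ≤ a i) : ∑ i ∈ s, a i ^ r ≤ (∑ i ∈ s, a i) ^ r :=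
  calc ∑ i ∈ s, a i ^ r ≤ ∑ i ∈ s, (∑ j ∈ s, a j) ^ (r - 1) * a i := by
        refine sum_le_sum fun i hi => ?_
        rw [← rpow_sub_one_mul_self (ha i hi) hr]
        exact mul_le_mul_of_nonneg_right
          (rpow_le_rpow (ha i hi) (single_le_sum ha hi) (by linarith)) (ha i hi)
    _ = (∑ i ∈ s, a i) ^ r := by rw [← mul_sum, rpow_sub_one_mul_self (sum_nonneg ha) hr]

lemma rpow_sum_le_sum_rpow_add_mul_rpow_sum_erase {ι : Type*} [Fintype ι] [DecidableEq ι]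
    {x : ι → ℝ} (hx : ∀ i, 0 ≤ x i) {r : ℝ} (hr : 1 ≤ r) :
    (∑ k, x k) ^ r ≤ 2 ^ (r - 1) * ∑ i, (x i ^ r + x i * (∑ k ∈ univ.erase i, x k) ^ (r - 1)) := by
  rw [← rpow_sub_one_mul_self (sum_nonneg fun k _ => hx k) hr, mul_sum, mul_sum]
  refine sum_le_sum fun i _ => ?_
  rw [mul_comm, ← add_sum_erase _ _ (mem_univ i)]
  exact mul_add_rpow_sub_one_le (hx i) (sum_nonneg fun k _ => hx k) hr

lemma le_max_of_le_mul_add_mul_rpow {m A B c r : ℝ} (hm : 0 ≤ m) (hA : 0 ≤ A) (hc : 0 ≤ c)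
    (hr : 0 < r)
    (h : m ≤ c * (B + A * m ^ ((r - 1) / r))) : m ≤ max ((2 * c * A) ^ r) (2 * c * B) := by
  rcases le_total (A * m ^ ((r - 1) / r)) B with hAB | hAB
  · exact le_max_of_le_right (by nlinarith)
  refine le_max_of_le_left ?_
  rcases hm.eq_or_lt with rfl | hm
  · positivity
  have hsplit : m ^ (1 / r) * m ^ ((r - 1) / r) = m := by
    rw [← rpow_add hm, ← add_div, add_sub_cancel, div_self hr.ne', rpow_one]
  have hroot : m ^ (1 / r) ≤ 2 * c * A := by
    refine le_of_mul_le_mul_right ?_ (rpow_pos_of_pos hm ((r - 1) / r))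
    rw [hsplit]; nlinarith
  calc m = (m ^ (1 / r)) ^ r := by rw [← rpow_mul hm.le, one_div_mul_cancel hr.ne', rpow_one]
    _ ≤ (2 * c * A) ^ r := by gcongr

lemma max_rpow_le_rpow_one_div_le_mul_max {m A B K p q : ℝ} (hq : 0 < q) (hqp : q ≤ p)
    (hK : 1 ≤ K) (hm : 0 ≤ m) (hA : 0 ≤ A) (hB : 0 ≤ B) (hBm : B ≤ m) (hAm : A ≤ m ^ (q / p))
    (hmax : m ≤ max ((K * A) ^ (p / q)) (K * B)) :
    max (B ^ (1 / p)) (A ^ (1 / q)) ≤ m ^ (1 / p) ∧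
      m ^ (1 / p) ≤ K ^ (1 / q) * max (B ^ (1 / p)) (A ^ (1 / q)) := by
  have hp : 0 < p := hq.trans_le hqp
  have hroot : ∀ x : ℝ, 0 ≤ x → (x ^ (q / p)) ^ (1 / q) = x ^ (1 / p) ∧
      (x ^ (p / q)) ^ (1 / p) = x ^ (1 / q) := fun x hx => by
    simp only [← rpow_mul hx]
    constructor <;> congr 1 <;> field_simp
  refine ⟨max_le (by gcongr) ((rpow_le_rpow hA hAm (by positivity)).trans_eq (hroot m hm).1), ?_⟩
  calc m ^ (1 / p) ≤ (max ((K * A) ^ (p / q)) (K * B)) ^ (1 / p) := by gcongr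
    _ = max ((K * A) ^ (1 / q)) ((K * B) ^ (1 / p)) := by
      rw [rpow_max (by positivity) (by positivity) (by positivity), (hroot _ (by positivity)).2]
    _ ≤ K ^ (1 / q) * max (B ^ (1 / p)) (A ^ (1 / q)) := by
      rw [mul_rpow (by positivity) hA, mul_rpow (by positivity) hB]
      refine max_le (by gcongr; exact le_max_right _ _) ?_
      gcongr
      exact le_max_left _ _

section Integrals

variable {Ω : Type*} [MeasurableSpace Ω] {μ : Measure Ω}

lemma integrable_rpow_of_le [IsFiniteMeasure μ] {u : Ω → ℝ} (hu : Measurable u)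
    (hu0 : ∀ ω, 0 ≤ u ω) {t s : ℝ} (ht : 0 ≤ t) (hts : t ≤ s)
    (hi : Integrable (fun ω => u ω ^ s) μ) : Integrable (fun ω => u ω ^ t) μ :=
  ((integrable_const 1).add hi).mono' (hu.pow_const t).aestronglyMeasurable <|
    ae_of_all _ fun ω => by
      rw [norm_of_nonneg (rpow_nonneg (hu0 ω) t)]
      exact rpow_le_one_add_rpow (hu0 ω) ht hts

lemma integrable_of_integrable_rpow [IsFiniteMeasure μ] {u : Ω → ℝ} (hu : Measurable u)
    (hu0 : ∀ ω, 0 ≤ u ω) {s : ℝ} (hs : 1 ≤ s) (hi : Integrable (fun ω => u ω ^ s) μ) :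
    Integrable u μ := by
  simpa using integrable_rpow_of_le hu hu0 zero_le_one hs hi

lemma integral_rpow_le_integral_rpow_rpow [IsProbabilityMeasure μ] {u : Ω → ℝ}
    (hu : Measurable u) (hu0 : ∀ ω, 0 ≤ u ω) {t s : ℝ} (ht : 0 ≤ t) (hts : t ≤ s)
    (hi : Integrable (fun ω => u ω ^ s) μ) :
    ∫ ω, u ω ^ t ∂μ ≤ (∫ ω, u ω ^ s ∂μ) ^ (t / s) := by
  rcases ht.eq_or_lt with rfl | ht
  · simp
  have hs : 0 < s := ht.trans_le hts
  have hpow : ∀ ω, (u ω ^ s) ^ (t / s) = u ω ^ t := fun ω => by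
    rw [← rpow_mul (hu0 ω), mul_div_cancel₀ t hs.ne']
  have hts' : 0 ≤ t / s := div_nonneg ht.le hs.le
  have hjensen := (concaveOn_rpow hts' ((div_le_one hs).2 hts)).le_map_integral
    (continuous_rpow_const hts').continuousOn isClosed_Ici
    (ae_of_all μ fun ω => Set.mem_Ici.2 (rpow_nonneg (hu0 ω) s)) hi
    (by simpa only [Function.comp_def, hpow] using integrable_rpow_of_le hu hu0 ht.le hts hi)
  simpa only [hpow] using hjensen

end Integrals

section Rosenthal

variable {Ω ι : Type*} [MeasurableSpace Ω] {μ : Measure Ω} {X : ι → Ω → ℝ}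

lemma integrable_rpow_sum (hmeas : ∀ k, Measurable (X k)) (hnn : ∀ k ω, 0 ≤ X k ω) {r : ℝ}
    (hr : 1 ≤ r) (hint : ∀ k, Integrable (fun ω => X k ω ^ r) μ) (s : Finset ι) :
    Integrable (fun ω => (∑ k ∈ s, X k ω) ^ r) μ :=
  ((integrable_finsetSum s fun k _ => hint k).const_mul _).mono'
    ((s.measurable_sum fun k _ => hmeas k).pow_const r).aestronglyMeasurable <|
    ae_of_all _ fun ω => by
      rw [norm_of_nonneg (rpow_nonneg (sum_nonneg fun k _ => hnn k ω) r)]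
      exact rpow_sum_le_const_mul_sum_rpow_of_nonneg s hr fun k _ => hnn k ω

lemma integral_rpow_sum_mono (hmeas : ∀ k, Measurable (X k)) (hnn : ∀ k ω, 0 ≤ X k ω) {r : ℝ}
    (hr : 1 ≤ r) (hint : ∀ k, Integrable (fun ω => X k ω ^ r) μ) {s t : Finset ι}
    (hst : s ⊆ t) : ∫ ω, (∑ k ∈ s, X k ω) ^ r ∂μ ≤ ∫ ω, (∑ k ∈ t, X k ω) ^ r ∂μ :=
  integral_mono (integrable_rpow_sum hmeas hnn hr hint s) (integrable_rpow_sum hmeas hnn hr hint t)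
    fun ω => rpow_le_rpow (sum_nonneg fun k _ => hnn k ω)
      (sum_le_sum_of_subset_of_nonneg hst fun k _ _ => hnn k ω) (by linarith)

lemma ProbabilityTheory.iIndepFun.indepFun_comp_sum_of_notMem (hindep : iIndepFun X μ)
    (hmeas : ∀ k, Measurable (X k)) {s : Finset ι} {i : ι} (hi : i ∉ s) {φ : ℝ → ℝ}
    (hφ : Measurable φ) : IndepFun (X i) (fun ω => φ (∑ k ∈ s, X k ω)) μ := by
  simpa only [Function.comp_def, Finset.sum_apply, id] using
    (hindep.indepFun_finsetSum_of_notMem hmeas hi).symm.comp measurable_id hφ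


lemma sum_integral_rpow_le_integral_rpow_sum [Fintype ι] (hmeas : ∀ k, Measurable (X k))
    (hnn : ∀ k ω, 0 ≤ X k ω) {r : ℝ} (hr : 1 ≤ r)
    (hint : ∀ k, Integrable (fun ω => X k ω ^ r) μ) :
    ∑ k, ∫ ω, X k ω ^ r ∂μ ≤ ∫ ω, (∑ k, X k ω) ^ r ∂μ := by
  rw [← integral_finsetSum _ fun k _ => hint k]
  exact integral_mono (integrable_finsetSum _ fun k _ => hint k)
    (integrable_rpow_sum hmeas hnn hr hint _) fun ω =>
      sum_rpow_le_rpow_sum _ hr fun k _ => hnn k ω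

lemma sum_integral_le_integral_rpow_sum_rpow [Fintype ι] [IsProbabilityMeasure μ]
    (hmeas : ∀ k, Measurable (X k)) (hnn : ∀ k ω, 0 ≤ X k ω) {r : ℝ} (hr : 1 ≤ r)
    (hint : ∀ k, Integrable (fun ω => X k ω ^ r) μ) :
    ∑ k, ∫ ω, X k ω ∂μ ≤ (∫ ω, (∑ k, X k ω) ^ r ∂μ) ^ (1 / r) := by
  rw [← integral_finsetSum _ fun k _ =>
    integrable_of_integrable_rpow (hmeas k) (hnn k) hr (hint k)]
  simpa using integral_rpow_le_integral_rpow_rpow (univ.measurable_sum fun k _ => hmeas k)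
    (fun ω => sum_nonneg fun k _ => hnn k ω) zero_le_one hr
    (integrable_rpow_sum hmeas hnn hr hint _)

lemma integrable_mul_rpow_sum [IsFiniteMeasure μ] (hmeas : ∀ k, Measurable (X k))
    (hnn : ∀ k ω, 0 ≤ X k ω) (hindep : iIndepFun X μ) {r : ℝ} (hr : 1 ≤ r)
    (hint : ∀ k, Integrable (fun ω => X k ω ^ r) μ) {s : Finset ι} {i : ι} (hi : i ∉ s) :
    Integrable (fun ω => X i ω * (∑ k ∈ s, X k ω) ^ (r - 1)) μ :=
  (hindep.indepFun_comp_sum_of_notMem (φ := fun x => x ^ (r - 1)) hmeas hi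
    (measurable_id.pow_const _)).integrable_mul
    (integrable_of_integrable_rpow (hmeas i) (hnn i) hr (hint i))
    (integrable_rpow_of_le (s.measurable_sum fun k _ => hmeas k)
      (fun ω => sum_nonneg fun k _ => hnn k ω) (by linarith) (by linarith)
      (integrable_rpow_sum hmeas hnn hr hint s))

lemma integral_mul_rpow_sum_le [IsProbabilityMeasure μ] (hmeas : ∀ k, Measurable (X k))
    (hnn : ∀ k ω, 0 ≤ X k ω) (hindep : iIndepFun X μ) {r : ℝ} (hr : 1 ≤ r)
    (hint : ∀ k, Integrable (fun ω => X k ω ^ r) μ) {s : Finset ι} {i : ι} (hi : i ∉ s) :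
    ∫ ω, X i ω * (∑ k ∈ s, X k ω) ^ (r - 1) ∂μ
      ≤ (∫ ω, X i ω ∂μ) * (∫ ω, (∑ k ∈ s, X k ω) ^ r ∂μ) ^ ((r - 1) / r) := by
  have hS : Measurable fun ω => ∑ k ∈ s, X k ω := s.measurable_sum fun k _ => hmeas k
  have hS0 : ∀ ω, 0 ≤ ∑ k ∈ s, X k ω := fun ω => sum_nonneg fun k _ => hnn k ω
  refine ((hindep.indepFun_comp_sum_of_notMem (φ := fun x => x ^ (r - 1)) hmeas hi
    (measurable_id.pow_const _)).integral_mul_eq_mul_integral (hmeas i).aestronglyMeasurable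
    (hS.pow_const _).aestronglyMeasurable).trans_le <| mul_le_mul_of_nonneg_left
    (integral_rpow_le_integral_rpow_rpow hS hS0 (by linarith) (by linarith)
      (integrable_rpow_sum hmeas hnn hr hint s))
    (integral_nonneg (hnn i))

theorem integral_rpow_sum_le_max [Fintype ι] [IsProbabilityMeasure μ]
    (hmeas : ∀ k, Measurable (X k)) (hnn : ∀ k ω, 0 ≤ X k ω) (hindep : iIndepFun X μ) {r : ℝ}
    (hr : 1 ≤ r) (hint : ∀ k, Integrable (fun ω => X k ω ^ r) μ) :
    ∫ ω, (∑ k, X k ω) ^ r ∂μ ≤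
      max ((2 ^ r * ∑ k, ∫ ω, X k ω ∂μ) ^ r) (2 ^ r * ∑ k, ∫ ω, X k ω ^ r ∂μ) := by
  classical
  set m := ∫ ω, (∑ k, X k ω) ^ r ∂μ
  have hmoment : ∀ i, ∫ ω, X i ω * (∑ k ∈ univ.erase i, X k ω) ^ (r - 1) ∂μ
      ≤ (∫ ω, X i ω ∂μ) * m ^ ((r - 1) / r) := fun i =>
    (integral_mul_rpow_sum_le hmeas hnn hindep hr hint (notMem_erase i univ)).trans <| by
      gcongr
      · exact integral_nonneg (hnn i)
      · exact integral_nonneg fun ω => rpow_nonneg (sum_nonneg fun k _ => hnn k ω) r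
      · exact integral_rpow_sum_mono hmeas hnn hr hint (erase_subset i univ)
  have hmul : ∀ i, Integrable (fun ω => X i ω * (∑ k ∈ univ.erase i, X k ω) ^ (r - 1)) μ :=
    fun i => integrable_mul_rpow_sum hmeas hnn hindep hr hint (notMem_erase i univ)
  have hterm : ∀ i, Integrable
      (fun ω => X i ω ^ r + X i ω * (∑ k ∈ univ.erase i, X k ω) ^ (r - 1)) μ :=
    fun i => (hint i).add (hmul i)
  have hrec : m ≤ 2 ^ (r - 1) * (∑ k, ∫ ω, X k ω ^ r ∂μ
      + (∑ k, ∫ ω, X k ω ∂μ) * m ^ ((r - 1) / r)) :=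
    calc m ≤ ∫ ω, 2 ^ (r - 1) * ∑ i,
            (X i ω ^ r + X i ω * (∑ k ∈ univ.erase i, X k ω) ^ (r - 1)) ∂μ :=
          integral_mono (integrable_rpow_sum hmeas hnn hr hint univ)
            ((integrable_finsetSum _ fun i _ => hterm i).const_mul _)
            fun ω => rpow_sum_le_sum_rpow_add_mul_rpow_sum_erase (hnn · ω) hr
      _ = 2 ^ (r - 1) * (∑ i, ∫ ω, X i ω ^ r ∂μ
            + ∑ i, ∫ ω, X i ω * (∑ k ∈ univ.erase i, X k ω) ^ (r - 1) ∂μ) := by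
          rw [integral_const_mul, integral_finsetSum _ fun i _ => hterm i,
            ← sum_add_distrib]
          exact congrArg _ (sum_congr rfl fun i _ => integral_add (hint i) (hmul i))
      _ ≤ _ := by
          rw [sum_mul]
          gcongr with i
          exact hmoment i
  have htwo : 2 * 2 ^ (r - 1) = (2 : ℝ) ^ r := by rw [rpow_sub_one two_ne_zero]; ring
  simpa only [htwo] using le_max_of_le_mul_add_mul_rpow
    (integral_nonneg fun ω => rpow_nonneg (sum_nonneg fun k _ => hnn k ω) r)
    (sum_nonneg fun k _ => integral_nonneg (hnn k)) (by positivity) (by linarith) hrec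

lemma sum_integral_comp_of_identDistrib [Fintype ι] {f : Ω → ℝ}
    (hident : ∀ k, IdentDistrib (X k) f μ μ) {φ : ℝ → ℝ} (hφ : Measurable φ) :
    ∑ k, ∫ ω, φ (X k ω) ∂μ = Fintype.card ι * ∫ ω, φ (f ω) ∂μ := by
  have hcopy : ∀ k, ∫ ω, φ (X k ω) ∂μ = ∫ ω, φ (f ω) ∂μ := fun k =>
    ((hident k).comp hφ).integral_eq
  simp only [hcopy, sum_const, card_univ, nsmul_eq_mul]

end Rosenthal

/-- **Identically-distributed form of the inequality (Σ_{pq})** from Section 3 of the paper: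
for `1 ≤ q ≤ p < ∞` there is a constant `C`, depending only on `p` and `q`, such that for every
probability space, every `f ∈ L_p` and every independent family `f₁, …, fₙ` of copies of `f`,
`(∫ (Σ |f_k|^q)^{p/q})^{1/p} ≈ max( n^{1/p} ‖f‖_p, n^{1/q} ‖f‖_q )`, i.e. `f ↦ (f₁, …, fₙ)` is
an isomorphic embedding of `J^n_{p,q}(Ω) = n^{1/p} L_p(Ω) ∩ n^{1/q} L_q(Ω)` into
`L_p(Ω; ℓ_qⁿ)` with constants independent of `n`. -/
theorem stmt_9 (p q : ℝ) (hq : 1 ≤ q) (hqp : q ≤ p) :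
    ∃ C : ℝ, 1 ≤ C ∧
      ∀ (Ω : Type) (_ : MeasurableSpace Ω) (μ : Measure Ω), IsProbabilityMeasure μ →
        ∀ f : Ω → ℝ, Measurable f → Integrable (fun ω => |f ω| ^ p) μ →
          ∀ (n : ℕ), 1 ≤ n →
            ∀ g : Fin n → Ω → ℝ, (∀ k, Measurable (g k)) →
              iIndepFun g μ →
              (∀ k, Measure.map (g k) μ = Measure.map f μ) →
              C⁻¹ * max ((n : ℝ) ^ (1 / p) * (∫ ω, |f ω| ^ p ∂μ) ^ (1 / p))
                    ((n : ℝ) ^ (1 / q) * (∫ ω, |f ω| ^ q ∂μ) ^ (1 / q))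
                  ≤ (∫ ω, (∑ k, |g k ω| ^ q) ^ (p / q) ∂μ) ^ (1 / p) ∧
                (∫ ω, (∑ k, |g k ω| ^ q) ^ (p / q) ∂μ) ^ (1 / p)
                  ≤ C * max ((n : ℝ) ^ (1 / p) * (∫ ω, |f ω| ^ p ∂μ) ^ (1 / p))
                    ((n : ℝ) ^ (1 / q) * (∫ ω, |f ω| ^ q ∂μ) ^ (1 / q)) := by
  have hq0 : 0 < q := by linarith
  have hr : 1 ≤ p / q := (one_le_div hq0).2 hqp
  have hK : (1 : ℝ) ≤ 2 ^ (p / q) := one_le_rpow one_le_two (by linarith)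
  have hC : (1 : ℝ) ≤ (2 ^ (p / q)) ^ (1 / q) := one_le_rpow hK (by positivity)
  refine ⟨_, hC, fun Ω _ μ _ f hf hfp n _ g hg hindep hmap => ?_⟩
  have hpow : ∀ x : ℝ, (|x| ^ q) ^ (p / q) = |x| ^ p := fun x => by
    rw [← rpow_mul (abs_nonneg x), mul_div_cancel₀ p hq0.ne']
  have hident : ∀ k, IdentDistrib (g k) f μ μ := fun k =>
    ⟨(hg k).aemeasurable, hf.aemeasurable, hmap k⟩
  have hXmeas : ∀ k, Measurable fun ω => |g k ω| ^ q := fun k => (hg k).abs.pow_const q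
  have hXnn : ∀ k ω, 0 ≤ |g k ω| ^ q := fun k ω => by positivity
  have hXint : ∀ k, Integrable (fun ω => (|g k ω| ^ q) ^ (p / q)) μ := fun k => by
    simpa only [hpow, Function.comp_def] using
      ((hident k).comp (measurable_abs.pow_const p)).integrable_iff.2 hfp
  have hindepX : iIndepFun (fun k ω => |g k ω| ^ q) μ :=
    hindep.comp _ fun _ => measurable_abs.pow_const q
  have hsum_q := sum_integral_comp_of_identDistrib hident (measurable_abs.pow_const q)
  have hsum_p := sum_integral_comp_of_identDistrib hident (measurable_abs.pow_const p)
  rw [Fintype.card_fin] at hsum_q hsum_p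
  obtain ⟨hlow, hup⟩ := max_rpow_le_rpow_one_div_le_mul_max (A := n * ∫ ω, |f ω| ^ q ∂μ)
    (B := n * ∫ ω, |f ω| ^ p ∂μ) hq0 hqp hK
    (integral_nonneg fun ω => rpow_nonneg (sum_nonneg fun k _ => hXnn k ω) _)
    (by positivity) (by positivity)
    (by simpa only [hpow, hsum_p] using
      sum_integral_rpow_le_integral_rpow_sum hXmeas hXnn hr hXint)
    (by simpa only [hsum_q, one_div_div] using
      sum_integral_le_integral_rpow_sum_rpow hXmeas hXnn hr hXint)
    (by simpa only [hpow, hsum_q, hsum_p] using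
      integral_rpow_sum_le_max hXmeas hXnn hindepX hr hXint)
  rw [← mul_rpow (by positivity) (by positivity), ← mul_rpow (by positivity) (by positivity)]
  exact ⟨(mul_le_of_le_one_left (by positivity) (inv_le_one_of_one_le₀ hC)).trans hlow, hup⟩
end
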